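/- For all real numbers x and μ, the series Σ_{j=0}^∞ h_j(x) · μ^j / j! converges and equals e^{xμ − μ²/2}. -/

import Mathlib

/-!
Expand `exp (x μ - μ² / 2) = exp (x μ) · exp (-μ² / 2)` as a Cauchy product of two absolutely
convergent power series in `μ`. The coefficient of `μⁿ` is `∑ₖ xᵏ / k! · c (n - k)`, where `c` are
the Taylor coefficients of `exp (-t² / 2)`, and the explicit formula for the coefficients of the
Hermite polynomials identifies this with `hₙ(x) / n!`.
-/

open Real

/-- Probabilists' Hermite polynomial evaluated at a real number. -/
noncomputable def hermiteR (j : ℕ) (x : ℝ) : ℝ := Polynomial.aeval x (Polynomial.hermite j)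

open Polynomial Finset Nat

lemma Nat.factorial_two_mul (m : ℕ) : (2 * m)! = 2 ^ m * m ! * (2 * m - 1)‼ := by
  rcases m with _ | m
  · rfl
  rw [show 2 * (m + 1) = (2 * m + 1) + 1 by ring, factorial_eq_mul_doubleFactorial,
    show 2 * m + 1 + 1 = 2 * (m + 1) by ring, doubleFactorial_two_mul]
  rfl

lemma Real.hasSum_pow_div_factorial (x : ℝ) : HasSum (fun n => x ^ n / n !) (exp x) := by
  rw [exp_eq_exp_ℝ]
  exact NormedSpace.expSeries_div_hasSum_exp x

section GaussianCoeff

variable {K : Type*} [Field K]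

/-- The Taylor coefficients of `t ↦ exp (-t² / 2)`. -/
def gaussianCoeff (l : ℕ) : K := if Even l then (-2⁻¹) ^ (l / 2) / (l / 2)! else 0

lemma gaussianCoeff_two_mul (m : ℕ) : gaussianCoeff (2 * m) = ((-2⁻¹) ^ m / m ! : K) := by
  simp [gaussianCoeff]

lemma gaussianCoeff_two_mul_add_one (m : ℕ) : gaussianCoeff (2 * m + 1) = (0 : K) := by
  simp [gaussianCoeff]

variable [CharZero K]

lemma coeff_hermite_two_mul_add_div_factorial (m k : ℕ) :
    ((hermite (2 * m + k)).coeff k : K) / (2 * m + k)! = (-2⁻¹) ^ m / m ! / k ! := by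
  have hfac : ((2 * m + k)! : K) =
      (2 * m + k).choose k * k ! * (2 ^ m * m ! * (2 * m - 1)‼) := by
    have := choose_mul_factorial_mul_factorial (Nat.le_add_left k (2 * m))
    rw [Nat.add_sub_cancel, Nat.factorial_two_mul] at this
    exact_mod_cast this.symm
  have hchoose : ((2 * m + k).choose k : K) ≠ 0 := by
    exact_mod_cast (choose_pos (Nat.le_add_left k _)).ne'
  have hdouble : ((2 * m - 1)‼ : K) ≠ 0 := by exact_mod_cast (doubleFactorial_pos _).ne'
  rw [coeff_hermite_explicit, hfac]
  push_cast
  field_simp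
  rw [← mul_pow]
  norm_num

lemma coeff_hermite_div_factorial {n k : ℕ} (hkn : k ≤ n) :
    ((hermite n).coeff k : K) / n ! = gaussianCoeff (n - k) / k ! := by
  obtain ⟨m, hm | hm⟩ := (n - k).even_or_odd'
  · rw [hm, gaussianCoeff_two_mul, show n = 2 * m + k by omega,
      coeff_hermite_two_mul_add_div_factorial]
  · rw [hm, gaussianCoeff_two_mul_add_one, coeff_hermite_of_odd_add (by rw [Nat.odd_iff]; omega)]
    simp

end GaussianCoeff

lemma hermiteR_div_factorial (n : ℕ) (x : ℝ) :
    hermiteR n x / n ! = ∑ k ∈ range (n + 1), x ^ k / k ! * (gaussianCoeff (n - k) : ℝ) := by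
  have hdeg : ((hermite n).map (algebraMap ℤ ℝ)).natDegree < n + 1 :=
    natDegree_map_le.trans_lt (by simp [natDegree_hermite])
  rw [hermiteR, aeval_def, eval₂_eq_eval_map, eval_eq_sum_range' hdeg, sum_div]
  refine sum_congr rfl fun k hk => ?_
  rw [coeff_map, eq_intCast, mul_comm, mul_div_assoc,
    coeff_hermite_div_factorial (Nat.lt_succ_iff.1 (mem_range.1 hk))]
  ring

lemma hasSum_gaussianCoeff_mul_pow (μ : ℝ) :
    HasSum (fun l => (gaussianCoeff l : ℝ) * μ ^ l) (exp (-(μ ^ 2 / 2))) := by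
  have heven : HasSum (fun m => (gaussianCoeff (2 * m) : ℝ) * μ ^ (2 * m))
      (exp (-(μ ^ 2 / 2))) := by
    refine (hasSum_pow_div_factorial _).congr_fun fun m => ?_
    rw [gaussianCoeff_two_mul, pow_mul, div_mul_eq_mul_div, ← mul_pow]
    congr 2
    ring
  have hodd : HasSum (fun m => (gaussianCoeff (2 * m + 1) : ℝ) * μ ^ (2 * m + 1)) 0 := by
    simpa only [gaussianCoeff_two_mul_add_one, zero_mul] using hasSum_zero
  simpa using HasSum.even_add_odd (f := fun l => (gaussianCoeff l : ℝ) * μ ^ l) heven hodd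

/-- The exponential generating function of the Hermite polynomials:
for all real `x` and `μ`, `∑_{j=0}^∞ h_j(x) μ^j / j!` converges and equals `e^{xμ - μ²/2}`. -/
theorem hermite_generating_function (x μ : ℝ) :
    HasSum (fun j : ℕ => hermiteR j x * μ ^ j / (Nat.factorial j))
      (Real.exp (x * μ - μ ^ 2 / 2)) := by
  have hexp := hasSum_pow_div_factorial (x * μ)
  have hgauss := hasSum_gaussianCoeff_mul_pow μ
  have hcauchy := hasSum_sum_range_mul_of_summable_norm (R := ℝ)
    (summable_norm_iff.2 hexp.summable) (summable_norm_iff.2 hgauss.summable)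
  rw [hexp.tsum_eq, hgauss.tsum_eq, ← exp_add, ← sub_eq_add_neg] at hcauchy
  refine hcauchy.congr_fun fun n => ?_
  rw [mul_div_right_comm, hermiteR_div_factorial, sum_mul]
  refine sum_congr rfl fun k hk => ?_
  rw [← Nat.add_sub_of_le (Nat.lt_succ_iff.1 (mem_range.1 hk)), pow_add, Nat.add_sub_cancel_left]
  ring
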